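/- Every infinite Sturmian word w is recurrent: every finite word that occurs as a subword of w occurs in w infinitely many times (at infinitely many starting positions). -/

import Mathlib

/-!
If a factor `u` of `w` occurred only before position `N`, the suffix `w' = w (N + ·)` would
miss `u`, so `p_{w'}(|u|) ≤ |u|`. Since `p_{w'}(0) = 1` and complexity is nondecreasing, some
length `m` has `p_{w'}(m + 1) = p_{w'}(m)`: every factor of length `m` has a unique right
extension, hence so does every longer factor, and `p_{w'}` is bounded. The positions before
`N` contribute at most `N` further factors of each length, so `p_w` would be bounded too,
contradicting `p_w(n) = n + 1`.
-/

/-- A finite word `u` is a subword (factor) of the right-infinite word `w` if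
it occurs as a contiguous block of consecutive letters of `w`. -/
def IsFactor {A : Type*} (w : ℕ → A) (u : List A) : Prop :=
  ∃ i : ℕ, u = (List.range u.length).map fun j => w (i + j)

/-- The subword complexity of a right-infinite word `w`: the number of
distinct subwords of `w` of length `n`. -/
noncomputable def icomplexity {A : Type*} (w : ℕ → A) (n : ℕ) : ℕ :=
  Set.ncard {u : List A | u.length = n ∧ IsFactor w u}

section Words

variable {A : Type*}

def subwordAt (w : ℕ → A) (i n : ℕ) : List A := (List.range n).map fun j => w (i + j)

def factors (w : ℕ → A) (n : ℕ) : Set (List A) := Set.range fun i => subwordAt w i n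

/-- No factor of length `m` is right special. -/
def UniqueRightExtension (w : ℕ → A) (m : ℕ) : Prop :=
  ∀ i j, subwordAt w i m = subwordAt w j m → w (i + m) = w (j + m)

section Subwords

variable (w : ℕ → A)

@[simp] lemma length_subwordAt (i n : ℕ) : (subwordAt w i n).length = n := by
  simp [subwordAt]

lemma subwordAt_succ (i n : ℕ) : subwordAt w i (n + 1) = subwordAt w i n ++ [w (i + n)] := by
  simp [subwordAt, List.range_succ]

lemma take_subwordAt_succ (i n : ℕ) : (subwordAt w i (n + 1)).take n = subwordAt w i n := by
  rw [subwordAt_succ, List.take_left' (length_subwordAt w i n)]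

lemma subwordAt_shift (N i n : ℕ) :
    subwordAt (fun j => w (N + j)) i n = subwordAt w (N + i) n := by
  simp [subwordAt, Nat.add_assoc]

variable {w}

lemma subwordAt_eq_subwordAt_iff {i j n : ℕ} :
    subwordAt w i n = subwordAt w j n ↔ ∀ t < n, w (i + t) = w (j + t) := by
  simp [subwordAt, List.map_inj_left]

lemma isFactor_iff_mem_factors {u : List A} : IsFactor w u ↔ u ∈ factors w u.length :=
  exists_congr fun _ => eq_comm

end Subwords

section Complexity

variable (w : ℕ → A)

lemma setOf_isFactor_eq_factors (n : ℕ) : {u | u.length = n ∧ IsFactor w u} = factors w n := by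
  ext u
  constructor
  · rintro ⟨rfl, hu⟩
    exact isFactor_iff_mem_factors.1 hu
  · rintro ⟨i, rfl⟩
    exact ⟨length_subwordAt w i n, isFactor_iff_mem_factors.2 (by simpa using ⟨i, rfl⟩)⟩

lemma icomplexity_eq_ncard_factors (n : ℕ) : icomplexity w n = (factors w n).ncard := by
  rw [icomplexity, setOf_isFactor_eq_factors]

lemma factors_zero : factors w 0 = {[]} := by
  simp [factors, subwordAt]

lemma icomplexity_zero : icomplexity w 0 = 1 := by
  rw [icomplexity_eq_ncard_factors, factors_zero, Set.ncard_singleton]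

lemma finite_factors [Finite A] (n : ℕ) : (factors w n).Finite :=
  (List.finite_length_eq A n).subset (by rintro _ ⟨i, rfl⟩; simp)

lemma image_take_factors_succ (n : ℕ) : List.take n '' factors w (n + 1) = factors w n := by
  rw [factors, ← Set.range_comp]
  exact congrArg Set.range (funext fun i => take_subwordAt_succ w i n)

lemma factors_shift_subset (N n : ℕ) : factors (fun j => w (N + j)) n ⊆ factors w n := by
  rintro _ ⟨i, rfl⟩
  exact ⟨N + i, (subwordAt_shift w N i n).symm⟩

lemma icomplexity_le_shift_add [Finite A] (N k : ℕ) :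
    icomplexity w k ≤ icomplexity (fun j => w (N + j)) k + N := by
  have hcover :
      factors w k ⊆ factors (fun j => w (N + j)) k ∪ (subwordAt w · k) '' Set.Iio N := by
    rintro _ ⟨i, rfl⟩
    rcases lt_or_ge i N with hi | hi
    · exact Or.inr ⟨i, hi, rfl⟩
    · refine Or.inl ⟨i - N, ?_⟩
      dsimp only
      rw [subwordAt_shift, Nat.add_sub_cancel' hi]
  have hprefix : ((subwordAt w · k) '' Set.Iio N).ncard ≤ N := by
    simpa using Set.ncard_image_le (f := (subwordAt w · k)) (Set.finite_Iio N)
  rw [icomplexity_eq_ncard_factors, icomplexity_eq_ncard_factors]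
  calc (factors w k).ncard
      ≤ (factors (fun j => w (N + j)) k ∪ (subwordAt w · k) '' Set.Iio N).ncard :=
        Set.ncard_le_ncard hcover ((finite_factors _ k).union ((Set.finite_Iio N).image _))
    _ ≤ _ := Set.ncard_union_le _ _
    _ ≤ _ := by gcongr

lemma icomplexity_monotone [Finite A] : Monotone (icomplexity w) := by
  refine monotone_nat_of_le_succ fun n => ?_
  simp only [icomplexity_eq_ncard_factors, ← image_take_factors_succ w n]
  exact Set.ncard_image_le (finite_factors w _)

lemma injOn_take_factors_succ_iff (m : ℕ) :
    Set.InjOn (List.take m) (factors w (m + 1)) ↔ UniqueRightExtension w m := by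
  constructor
  · intro hinj i j hij
    have h := hinj ⟨i, rfl⟩ ⟨j, rfl⟩ (by simpa only [take_subwordAt_succ] using hij)
    simpa [subwordAt_succ] using congrArg List.getLast? h
  · rintro hext _ ⟨i, rfl⟩ _ ⟨j, rfl⟩ hij
    dsimp only at hij ⊢
    simp only [take_subwordAt_succ] at hij
    rw [subwordAt_succ, subwordAt_succ, hij, hext i j hij]

variable {w}

lemma icomplexity_succ_le_iff [Finite A] {m : ℕ} :
    icomplexity w (m + 1) ≤ icomplexity w m ↔ UniqueRightExtension w m := by
  rw [← injOn_take_factors_succ_iff, icomplexity_eq_ncard_factors, icomplexity_eq_ncard_factors,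
    ← image_take_factors_succ w m]
  refine ⟨fun h => Set.injOn_of_ncard_image_eq ?_ (finite_factors w _), fun h => ?_⟩
  · exact le_antisymm (Set.ncard_image_le (finite_factors w _)) h
  · exact h.ncard_image.ge

lemma UniqueRightExtension.mono {m k : ℕ} (h : UniqueRightExtension w m) (hmk : m ≤ k) :
    UniqueRightExtension w k := by
  obtain ⟨d, rfl⟩ := Nat.exists_eq_add_of_le hmk
  intro i j hij
  rw [subwordAt_eq_subwordAt_iff] at hij
  have hsuffix : subwordAt w (i + d) m = subwordAt w (j + d) m :=
    subwordAt_eq_subwordAt_iff.2 fun t ht => by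
      simpa only [Nat.add_assoc] using hij (d + t) (by omega)
  simpa only [Nat.add_assoc, Nat.add_comm d m] using h _ _ hsuffix

/-- Morse–Hedlund: a unique right extension at length `m` persists at every greater length. -/
lemma icomplexity_le_of_succ_le [Finite A] {m : ℕ}
    (h : icomplexity w (m + 1) ≤ icomplexity w m) (k : ℕ) :
    icomplexity w k ≤ icomplexity w m := by
  rcases le_total k m with hkm | hmk
  · exact icomplexity_monotone w hkm
  induction k, hmk using Nat.le_induction with
  | base => exact le_rfl
  | succ k hmk ih =>
    exact (icomplexity_succ_le_iff.2 ((icomplexity_succ_le_iff.1 h).mono hmk)).trans ih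

lemma bddAbove_range_icomplexity_of_le_self [Finite A] {n : ℕ} (hn : icomplexity w n ≤ n) :
    BddAbove (Set.range (icomplexity w)) := by
  obtain ⟨m, hm⟩ : ∃ m, icomplexity w (m + 1) ≤ icomplexity w m := by
    by_contra! hgrow
    have := (strictMono_nat_of_lt_succ hgrow).add_le_nat n 0
    simp only [icomplexity_zero, Nat.add_zero] at this
    omega
  exact ⟨icomplexity w m, Set.forall_mem_range.2 (icomplexity_le_of_succ_le hm)⟩

lemma bddAbove_range_icomplexity_of_finite_occurrences [Finite A] {u : List A}
    (hu : IsFactor w u) (hp : icomplexity w u.length ≤ u.length + 1)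
    (hfin : {i | u = subwordAt w i u.length}.Finite) :
    BddAbove (Set.range (icomplexity w)) := by
  obtain ⟨N, hN⟩ := hfin.bddAbove
  have hmissing : u ∉ factors (fun j => w (N + 1 + j)) u.length := by
    rintro ⟨i, hi⟩
    have hocc : u = subwordAt w (N + 1 + i) u.length := by
      conv_lhs => rw [← hi]
      exact subwordAt_shift w (N + 1) i _
    have : N + 1 + i ≤ N := hN hocc
    omega
  have hlt : icomplexity (fun j => w (N + 1 + j)) u.length < icomplexity w u.length := by
    rw [icomplexity_eq_ncard_factors, icomplexity_eq_ncard_factors]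
    refine Set.ncard_lt_ncard ?_ (finite_factors w _)
    exact (Set.ssubset_iff_of_subset (factors_shift_subset w _ _)).2
      ⟨u, isFactor_iff_mem_factors.1 hu, hmissing⟩
  obtain ⟨C, hC⟩ := bddAbove_range_icomplexity_of_le_self
    (w := fun j => w (N + 1 + j)) (n := u.length) (by omega)
  refine ⟨C + (N + 1), Set.forall_mem_range.2 fun k => ?_⟩
  have := hC ⟨k, rfl⟩
  have := icomplexity_le_shift_add w (N + 1) k
  omega

end Complexity

end Words

/-- An infinite Sturmian word (a right-infinite word with `p_w(n) = n + 1` for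
all `n ≥ 1`) is recurrent: every finite subword of `w` occurs at infinitely
many starting positions in `w`. -/
theorem sturmian_recurrent {A : Type*} [Fintype A] (w : ℕ → A)
    (hS : ∀ n, 1 ≤ n → icomplexity w n = n + 1)
    (u : List A) (hu : IsFactor w u) :
    {i : ℕ | u = (List.range u.length).map fun j => w (i + j)}.Infinite := by
  intro hfin
  have hp : icomplexity w u.length ≤ u.length + 1 := by
    rcases Nat.eq_zero_or_pos u.length with h | h
    · simp [h, icomplexity_zero]
    · exact (hS _ h).le
  obtain ⟨C, hC⟩ := bddAbove_range_icomplexity_of_finite_occurrences hu hp hfin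
  have := hC ⟨C + 1, rfl⟩
  rw [hS _ (by omega)] at this
  omega
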